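/- arXiv:2506.13517 — 2 statements merged into one kernel-verified Lean document; each statement's English description precedes it below -/
import Mathlib

section
/- Let f : ℝ² × Y → ℝ be smooth with fiberwise mean zero (∫_{{z}×Y} f dvol_Y = 0 for all z ∈ ℝ²), Y compact with Laplacian eigenvalues 0 = λ₀ < λ₁ ≤ λ₂ ≤ …, and suppose |∇^j f| = O(r^{−μ}) for j ≤ 2 and some μ > 0. If u_i = f_i * B_i where f_i(z) = ∫_Y f(z,·)v_i and B_i is the kernel with Fourier transform (λ_i + |ξ|²)^{−1}, then |u_i(z)| ≤ C·λ_i^{−k/2}·|z|^{−μ} for |z| large, with C independent of i. -/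
/-!
Writing `B_λ(z) = ½ ∫₀^∞ t⁻¹ exp (-λ t - |z|² / 4t) dt` and integrating first in the space
variable, the Gaussian integral `∫ exp (-|v|² / 8t) dv = 8πt` cancels the factor `t⁻¹`; hence the
mass of `B_λ` outside a ball of radius `ρ` is at most `8π exp (-ρ/2)`, uniformly in `λ ≥ 1`.
Split the convolution `∫ f(w) B_λ(z - w) dw` at the ball `|w - z| ≤ |z|/2`: inside it
`|w| ≥ |z|/2`, so `|f| ≲ λ^{-k/2} |z|^{-μ}` against total kernel mass `≤ 8π`; outside it
`|f| ≲ λ^{-k/2}` against kernel mass `≤ 8π exp (-|z|/4) = o(|z|^{-μ})`.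
-/

open MeasureTheory Set

/-- The Green's kernel `B_i` of `Δ − λ` on `ℝ²` (Fourier transform `1/(λ + |ξ|²)`). -/
noncomputable def Bker (lam : ℝ) (z : EuclideanSpace ℝ (Fin 2)) : ℝ :=
  (1 / 2) * ∫ t in Set.Ioi (0:ℝ), t⁻¹ * Real.exp (-lam * t - ‖z‖ ^ 2 / (4 * t))

open Real ENNReal Filter

local notation "E2" => EuclideanSpace ℝ (Fin 2)

theorem ofReal_integral_le_lintegral_ofReal {α : Type*} [MeasurableSpace α] {μ : Measure α}
    {f : α → ℝ} (hf : 0 ≤ᵐ[μ] f) :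
    ENNReal.ofReal (∫ x, f x ∂μ) ≤ ∫⁻ x, ENNReal.ofReal (f x) ∂μ :=
  calc ENNReal.ofReal (∫ x, f x ∂μ) ≤ ‖∫ x, f x ∂μ‖ₑ := by
        rw [Real.enorm_eq_ofReal_abs]; exact ENNReal.ofReal_le_ofReal (le_abs_self _)
    _ ≤ ∫⁻ x, ‖f x‖ₑ ∂μ := enorm_integral_le_lintegral_enorm f
    _ = ∫⁻ x, ENNReal.ofReal (f x) ∂μ :=
        lintegral_congr_ae (hf.mono fun x hx => Real.enorm_eq_ofReal hx)

theorem lintegral_ofReal_exp_neg_mul_sq_norm {V : Type*} [NormedAddCommGroup V]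
    [InnerProductSpace ℝ V] [FiniteDimensional ℝ V] [MeasurableSpace V] [BorelSpace V]
    {b : ℝ} (hb : 0 < b) :
    ∫⁻ v : V, ENNReal.ofReal (exp (-b * ‖v‖ ^ 2)) =
      ENNReal.ofReal ((π / b) ^ (Module.finrank ℝ V / 2 : ℝ)) := by
  have hI := GaussianFourier.integral_rexp_neg_mul_sq_norm (V := V) hb
  rw [← hI, ofReal_integral_eq_lintegral_ofReal]
  · exact .of_integral_ne_zero (by rw [hI]; positivity)
  · exact .of_forall fun v => (exp_pos _).le

theorem lintegral_ofReal_exp_neg_half :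
    ∫⁻ t in Ioi (0:ℝ), ENNReal.ofReal (exp (-(t / 2))) = ENNReal.ofReal 2 := by
  have hexp : ∀ t : ℝ, exp (-(t / 2)) = exp (-(1 / 2) * t) := fun t => by ring_nf
  simp_rw [hexp]
  rw [← ofReal_integral_eq_lintegral_ofReal (exp_neg_integrableOn_Ioi 0 (by norm_num))
    (.of_forall fun t => (exp_pos _).le), integral_exp_mul_Ioi (by norm_num)]
  norm_num

theorem lintegral_ofReal_exp_neg_mul_sq_norm_sub {b : ℝ} (hb : 0 < b) (z : E2) :
    ∫⁻ w : E2, ENNReal.ofReal (exp (-b * ‖z - w‖ ^ 2)) = ENNReal.ofReal (π / b) := by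
  rw [lintegral_sub_left_eq_self (fun v : E2 => ENNReal.ofReal (exp (-b * ‖v‖ ^ 2))),
    lintegral_ofReal_exp_neg_mul_sq_norm hb, finrank_euclideanSpace_fin]
  norm_num

-- Half of the Gaussian factor pays, through `t / 2 + ρ² / (8t) ≥ ρ / 2`, for the decay
-- `exp (-ρ / 2)`; the other half keeps the integral over `w` finite.
theorem exp_neg_heat_le {lam t ρ s : ℝ} (hlam : 1 ≤ lam) (ht : 0 < t) (hρ : 0 ≤ ρ)
    (hs : ρ ≤ s) :
    exp (-lam * t - s ^ 2 / (4 * t)) ≤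
      exp (-(ρ / 2)) * exp (-(t / 2)) * exp (-(1 / (8 * t)) * s ^ 2) := by
  rw [← exp_add, ← exp_add, exp_le_exp]
  have hamgm : ρ / 2 - t / 2 ≤ ρ ^ 2 / (8 * t) := by
    rw [le_div_iff₀ (by positivity)]
    nlinarith [sq_nonneg (2 * t - ρ)]
  have hsq : ρ ^ 2 / (8 * t) ≤ s ^ 2 / (8 * t) := by gcongr
  have hlt : t ≤ lam * t := by nlinarith
  have h4 : s ^ 2 / (4 * t) = 2 * (s ^ 2 / (8 * t)) := by field_simp; ring
  have h8 : -(1 / (8 * t)) * s ^ 2 = -(s ^ 2 / (8 * t)) := by ring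
  rw [h4, h8]
  linarith

theorem setLIntegral_heat_le {lam t ρ : ℝ} (hlam : 1 ≤ lam) (ht : 0 < t) (hρ : 0 ≤ ρ)
    (z : E2) {A : Set E2} (hA : ∀ w ∈ A, ρ ≤ ‖z - w‖) :
    ∫⁻ w in A, ENNReal.ofReal (t⁻¹ * exp (-lam * t - ‖z - w‖ ^ 2 / (4 * t))) ≤
      ENNReal.ofReal (8 * π * exp (-(ρ / 2)) * exp (-(t / 2))) := by
  set c := t⁻¹ * (exp (-(ρ / 2)) * exp (-(t / 2))) with hc
  calc ∫⁻ w in A, ENNReal.ofReal (t⁻¹ * exp (-lam * t - ‖z - w‖ ^ 2 / (4 * t)))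
      ≤ ∫⁻ w in A, ENNReal.ofReal c * ENNReal.ofReal (exp (-(1 / (8 * t)) * ‖z - w‖ ^ 2)) := by
        refine setLIntegral_mono (by fun_prop) fun w hw => ?_
        rw [← ENNReal.ofReal_mul (by positivity), mul_assoc]
        gcongr
        exact exp_neg_heat_le hlam ht hρ (hA w hw)
    _ ≤ ENNReal.ofReal c * ∫⁻ w, ENNReal.ofReal (exp (-(1 / (8 * t)) * ‖z - w‖ ^ 2)) := by
        rw [lintegral_const_mul' _ _ ofReal_ne_top]
        gcongr
        exact Measure.restrict_le_self
    _ = ENNReal.ofReal (8 * π * exp (-(ρ / 2)) * exp (-(t / 2))) := by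
        rw [lintegral_ofReal_exp_neg_mul_sq_norm_sub (by positivity),
          ← ENNReal.ofReal_mul (by positivity), hc]
        field_simp

theorem Bker_nonneg (lam : ℝ) (z : E2) : 0 ≤ Bker lam z :=
  mul_nonneg (by norm_num) <| setIntegral_nonneg measurableSet_Ioi fun t (ht : 0 < t) => by
    positivity

theorem setLIntegral_Bker_le {lam ρ : ℝ} (hlam : 1 ≤ lam) (hρ : 0 ≤ ρ) (z : E2) {A : Set E2}
    (hA : ∀ w ∈ A, ρ ≤ ‖z - w‖) :
    ∫⁻ w in A, ENNReal.ofReal (Bker lam (z - w)) ≤ ENNReal.ofReal (8 * π * exp (-(ρ / 2))) := by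
  calc ∫⁻ w in A, ENNReal.ofReal (Bker lam (z - w))
      ≤ ∫⁻ w in A, ENNReal.ofReal (1 / 2) * ∫⁻ t in Ioi (0:ℝ),
          ENNReal.ofReal (t⁻¹ * exp (-lam * t - ‖z - w‖ ^ 2 / (4 * t))) := by
        refine lintegral_mono fun w => ?_
        rw [Bker, ENNReal.ofReal_mul (by norm_num)]
        gcongr
        refine ofReal_integral_le_lintegral_ofReal ?_
        filter_upwards [self_mem_ae_restrict measurableSet_Ioi] with t (ht : 0 < t)
        positivity
    _ = ENNReal.ofReal (1 / 2) * ∫⁻ t in Ioi (0:ℝ), ∫⁻ w in A,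
          ENNReal.ofReal (t⁻¹ * exp (-lam * t - ‖z - w‖ ^ 2 / (4 * t))) := by
        rw [lintegral_const_mul' _ _ ofReal_ne_top, lintegral_lintegral_swap (by fun_prop)]
    _ ≤ ENNReal.ofReal (1 / 2) * ∫⁻ t in Ioi (0:ℝ),
          ENNReal.ofReal (8 * π * exp (-(ρ / 2))) * ENNReal.ofReal (exp (-(t / 2))) := by
        refine mul_le_mul_right (setLIntegral_mono' measurableSet_Ioi fun t ht => ?_) _
        rw [← ENNReal.ofReal_mul (by positivity)]
        exact setLIntegral_heat_le hlam ht hρ z hA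
    _ = ENNReal.ofReal (8 * π * exp (-(ρ / 2))) := by
        rw [lintegral_const_mul' _ _ ofReal_ne_top, lintegral_ofReal_exp_neg_half,
          ← ENNReal.ofReal_mul (by positivity), ← ENNReal.ofReal_mul (by norm_num)]
        ring_nf

theorem abs_integral_mul_le_of_split {α : Type*} [MeasurableSpace α] {μ : Measure α}
    {f g : α → ℝ} (hg : ∀ x, 0 ≤ g x) {S : Set α} (hS : MeasurableSet S) {a b A B : ℝ}
    (ha : 0 ≤ a) (hb : 0 ≤ b) (hA : 0 ≤ A) (hB : 0 ≤ B)
    (hfS : ∀ x ∈ S, |f x| ≤ a) (hfSc : ∀ x ∉ S, |f x| ≤ b)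
    (hgS : ∫⁻ x in S, ENNReal.ofReal (g x) ∂μ ≤ ENNReal.ofReal A)
    (hgSc : ∫⁻ x in Sᶜ, ENNReal.ofReal (g x) ∂μ ≤ ENNReal.ofReal B) :
    |∫ x, f x * g x ∂μ| ≤ a * A + b * B := by
  have hpt : ∀ {x c}, |f x| ≤ c →
      ENNReal.ofReal ‖f x * g x‖ ≤ ENNReal.ofReal c * ENNReal.ofReal (g x) := fun {x c} h => by
    rw [← ENNReal.ofReal_mul ((abs_nonneg _).trans h), norm_mul, Real.norm_eq_abs,
      Real.norm_eq_abs, abs_of_nonneg (hg x)]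
    exact ENNReal.ofReal_le_ofReal (mul_le_mul_of_nonneg_right h (hg x))
  have hle : ∫⁻ x, ENNReal.ofReal ‖f x * g x‖ ∂μ ≤ ENNReal.ofReal (a * A + b * B) :=
    calc ∫⁻ x, ENNReal.ofReal ‖f x * g x‖ ∂μ
        = (∫⁻ x in S, ENNReal.ofReal ‖f x * g x‖ ∂μ) +
            ∫⁻ x in Sᶜ, ENNReal.ofReal ‖f x * g x‖ ∂μ := (lintegral_add_compl _ hS).symm
      _ ≤ ENNReal.ofReal a * (∫⁻ x in S, ENNReal.ofReal (g x) ∂μ) +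
            ENNReal.ofReal b * ∫⁻ x in Sᶜ, ENNReal.ofReal (g x) ∂μ := by
          rw [← lintegral_const_mul' _ _ ofReal_ne_top, ← lintegral_const_mul' _ _ ofReal_ne_top]
          exact add_le_add (setLIntegral_mono' hS fun x hx => hpt (hfS x hx))
            (setLIntegral_mono' hS.compl fun x hx => hpt (hfSc x hx))
      _ ≤ ENNReal.ofReal a * ENNReal.ofReal A + ENNReal.ofReal b * ENNReal.ofReal B := by
          gcongr
      _ = ENNReal.ofReal (a * A + b * B) := by
          rw [ENNReal.ofReal_add (by positivity) (by positivity), ENNReal.ofReal_mul ha,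
            ENNReal.ofReal_mul hb]
  rw [← Real.norm_eq_abs]
  exact (norm_integral_le_lintegral_norm _).trans
    (ENNReal.toReal_le_of_le_ofReal (by positivity) hle)

theorem eventually_exp_neg_mul_le_rpow_neg {a : ℝ} (ha : 0 < a) (μ : ℝ) :
    ∀ᶠ x in atTop, exp (-a * x) ≤ x ^ (-μ) := by
  filter_upwards [(isLittleO_exp_neg_mul_rpow_atTop ha (-μ)).bound one_pos,
    eventually_gt_atTop 0] with x hx hx0
  rwa [one_mul, Real.norm_of_nonneg (exp_pos _).le,
    Real.norm_of_nonneg (rpow_pos_of_pos hx0 _).le] at hx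

theorem div_two_rpow_neg {x : ℝ} (hx : 0 < x) (μ : ℝ) : (x / 2) ^ (-μ) = 2 ^ μ * x ^ (-μ) := by
  rw [div_rpow hx.le zero_le_two, rpow_neg zero_le_two, div_inv_eq_mul, mul_comm]

theorem abs_integral_mul_Bker_le {lam μ c : ℝ} (hlam : 1 ≤ lam) (hμ : 0 ≤ μ) (hc : 0 ≤ c)
    {f : E2 → ℝ} (hf : ∀ w, |f w| ≤ c * (max 1 ‖w‖) ^ (-μ)) {z : E2} (hz : 0 < ‖z‖) :
    |∫ w, f w * Bker lam (z - w)| ≤ 8 * π * c * (2 ^ μ * ‖z‖ ^ (-μ) + exp (-(‖z‖ / 4))) := by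
  have hnear : ∀ w ∈ Metric.closedBall z (‖z‖ / 2), |f w| ≤ c * (2 ^ μ * ‖z‖ ^ (-μ)) := by
    intro w hw
    rw [Metric.mem_closedBall', dist_eq_norm] at hw
    have hw' : ‖z‖ / 2 ≤ ‖w‖ := by linarith [norm_sub_norm_le z w]
    refine (hf w).trans (mul_le_mul_of_nonneg_left ?_ hc)
    rw [← div_two_rpow_neg hz]
    exact rpow_le_rpow_of_nonpos (by positivity) (hw'.trans (le_max_right _ _)) (by linarith)
  have hfar : ∀ w, |f w| ≤ c := fun w => (hf w).trans <|
    mul_le_of_le_one_right hc (rpow_le_one_of_one_le_of_nonpos (le_max_left _ _) (by linarith))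
  have hsplit := abs_integral_mul_le_of_split (fun w => Bker_nonneg lam (z - w))
    Metric.isClosed_closedBall.measurableSet (by positivity) hc (by positivity)
    (by positivity) hnear (fun w _ => hfar w)
    (setLIntegral_Bker_le hlam le_rfl z fun w _ => norm_nonneg _)
    (setLIntegral_Bker_le hlam (ρ := ‖z‖ / 2) (by positivity) z fun w hw => by
      rw [mem_compl_iff, Metric.mem_closedBall', dist_eq_norm, not_le] at hw
      exact hw.le)
  rw [zero_div, neg_zero, exp_zero, mul_one, div_div, show (2:ℝ) * 2 = 4 by norm_num] at hsplit
  exact hsplit.trans_eq (by ring)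

theorem stmt12_general (μ C₀ k : ℝ) (hμ : 0 < μ) :
    ∃ C > 0, ∃ R ≥ (1:ℝ), ∀ lam : ℝ, 1 ≤ lam →
      ∀ f : EuclideanSpace ℝ (Fin 2) → ℝ, Continuous f →
      (∀ w, |f w| ≤ C₀ * lam ^ (-k / 2) * (max 1 ‖w‖) ^ (-μ)) →
      ∀ z : EuclideanSpace ℝ (Fin 2), R ≤ ‖z‖ →
        |∫ w, f w * Bker lam (z - w)| ≤ C * lam ^ (-k / 2) * ‖z‖ ^ (-μ) := by
  obtain ⟨R₀, hR₀⟩ :=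
    eventually_atTop.mp (eventually_exp_neg_mul_le_rpow_neg (a := 1 / 4) (by norm_num) μ)
  refine ⟨8 * π * (2 ^ μ + 1) * max C₀ 1, by positivity, max 1 R₀, le_max_left _ _, ?_⟩
  intro lam hlam f _ hf z hz
  have hz0 : 0 < ‖z‖ := one_pos.trans_le ((le_max_left _ _).trans hz)
  have hdecay : exp (-(‖z‖ / 4)) ≤ ‖z‖ ^ (-μ) := by
    convert hR₀ ‖z‖ ((le_max_right _ _).trans hz) using 2; ring
  calc |∫ w, f w * Bker lam (z - w)|
      ≤ 8 * π * (max C₀ 1 * lam ^ (-k / 2)) * (2 ^ μ * ‖z‖ ^ (-μ) + exp (-(‖z‖ / 4))) :=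
        abs_integral_mul_Bker_le hlam hμ.le (by positivity)
          (fun w => (hf w).trans (by gcongr; exact le_max_left C₀ 1)) hz0
    _ ≤ 8 * π * (max C₀ 1 * lam ^ (-k / 2)) * (2 ^ μ * ‖z‖ ^ (-μ) + ‖z‖ ^ (-μ)) := by gcongr
    _ = 8 * π * (2 ^ μ + 1) * max C₀ 1 * lam ^ (-k / 2) * ‖z‖ ^ (-μ) := by ring

/-- Decay of the Fourier modes `u_i = f_i * B_i` of the solution of the Poisson equation on a
product `ℝ² × Y`: if `|f_i| ≤ C₀ λ_i^{−k/2} r^{−μ}` then `|u_i(z)| ≤ C λ_i^{−k/2} |z|^{−μ}`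
for `|z|` large, with `C` independent of `i` (i.e. of the eigenvalue `λ_i ≥ 1`). -/
theorem stmt12 (μ C₀ k : ℝ) (hμ : 0 < μ) (hC₀ : 0 < C₀) :
    ∃ C > 0, ∃ R ≥ (1:ℝ), ∀ lam : ℝ, 1 ≤ lam →
      ∀ f : EuclideanSpace ℝ (Fin 2) → ℝ, Continuous f →
      (∀ w, |f w| ≤ C₀ * lam ^ (-k / 2) * (max 1 ‖w‖) ^ (-μ)) →
      ∀ z : EuclideanSpace ℝ (Fin 2), R ≤ ‖z‖ →
        |∫ w, f w * Bker lam (z - w)| ≤ C * lam ^ (-k / 2) * ‖z‖ ^ (-μ) :=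
  stmt12_general μ C₀ k hμ
end

section
/- Consider the first Fourier mode of Δu = f on ℝ² with |f₁(r)| ≤ C·r^{−1} and f₁ ≡ 0 for r ≤ 1. Then the solution u₁(s) = e^s ∫_{−∞}^s e^{−2σ} (∫_{−∞}^σ e^{3λ} f₁(e^λ) dλ) dσ (in the variable s = log r) vanishes for s ≤ 0 and satisfies |u₁(r)| ≤ C'·r·log r as r → ∞. -/
open MeasureTheory Set Real

/-! In the variable `s = log r` the inner primitive `F(σ) = ∫_{-∞}^σ e^{3λ} f₁(e^λ) dλ` vanishes
for `σ ≤ 0`, and the decay `|f₁(r)| ≤ C/r` gives `|F(σ)| ≤ (C/2) e^{2σ}`. Hence the outer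
integrand `e^{-2σ} F(σ)` is supported in `σ > 0` and bounded by `C/2`, so its integral up to `s`
is at most `(C/2) s`, which yields `|u₁(s)| ≤ (C/2) e^s s`. -/

lemma setIntegral_Iic_eq_setIntegral_Ioc_of_eq_zero {α E : Type*} [LinearOrder α]
    [TopologicalSpace α] [OrderClosedTopology α] [MeasurableSpace α] [OpensMeasurableSpace α]
    [NormedAddCommGroup E] [NormedSpace ℝ E] {μ : Measure α} {f : α → E} {a : α}
    (hf : ∀ x ≤ a, f x = 0) (b : α) :
    ∫ x in Iic b, f x ∂μ = ∫ x in Ioc a b, f x ∂μ := by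
  have hsupp : (Ioi a).indicator f = f :=
    indicator_eq_self.2 fun x hx => not_le.1 fun hxa => hx (hf x hxa)
  calc ∫ x in Iic b, f x ∂μ = ∫ x in Iic b, (Ioi a).indicator f x ∂μ := by rw [hsupp]
    _ = ∫ x in Ioc a b, f x ∂μ := by
      rw [setIntegral_indicator measurableSet_Ioi, inter_comm, Ioi_inter_Iic]

lemma norm_setIntegral_Iic_le_of_norm_le_exp {E : Type*} [NormedAddCommGroup E]
    [NormedSpace ℝ E] {g : ℝ → E} {C k b : ℝ} (hk : 0 < k)
    (hg : ∀ x ≤ b, ‖g x‖ ≤ C * exp (k * x)) :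
    ‖∫ x in Iic b, g x‖ ≤ C / k * exp (k * b) :=
  calc ‖∫ x in Iic b, g x‖ ≤ ∫ x in Iic b, C * exp (k * x) :=
        norm_integral_le_of_norm_le ((integrableOn_exp_mul_Iic hk b).const_mul C)
          (ae_restrict_of_forall_mem measurableSet_Iic hg)
    _ = C / k * exp (k * b) := by
      rw [integral_const_mul, integral_exp_mul_Iic hk]
      ring

lemma norm_exp_mul_comp_exp_le {f : ℝ → ℝ} {C : ℝ} (hC : 0 ≤ C) (hvan : ∀ r ≤ (1 : ℝ), f r = 0)
    (hdec : ∀ r : ℝ, 1 ≤ r → |f r| ≤ C / r) (l : ℝ) :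
    ‖exp (3 * l) * f (exp l)‖ ≤ C * exp (2 * l) := by
  rcases le_total l 0 with hl | hl
  · rw [hvan _ (exp_le_one_iff.2 hl), mul_zero, norm_zero]
    positivity
  · calc ‖exp (3 * l) * f (exp l)‖ = exp (3 * l) * |f (exp l)| := by
          rw [norm_mul, norm_of_nonneg (exp_pos _).le, norm_eq_abs]
      _ ≤ exp (3 * l) * (C / exp l) := by
          gcongr
          exact hdec _ (one_le_exp hl)
      _ = C * exp (2 * l) := by
          rw [show 3 * l = 2 * l + l by ring, exp_add]
          field_simp

theorem stmt15_general (C : ℝ) (hC : 0 < C)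
    (f₁ : ℝ → ℝ) (hvan : ∀ r ≤ (1:ℝ), f₁ r = 0)
    (hdec : ∀ r : ℝ, 1 ≤ r → |f₁ r| ≤ C / r) :
    (∀ s ≤ (0:ℝ),
      Real.exp s * (∫ σ in Set.Iic s,
        Real.exp (-2 * σ) * ∫ l in Set.Iic σ, Real.exp (3 * l) * f₁ (Real.exp l)) = 0) ∧
    (∃ C' > 0, ∀ s : ℝ, 1 ≤ s →
      |Real.exp s * ∫ σ in Set.Iic s,
        Real.exp (-2 * σ) * ∫ l in Set.Iic σ, Real.exp (3 * l) * f₁ (Real.exp l)| ≤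
        C' * Real.exp s * s) := by
  set F : ℝ → ℝ := fun σ => ∫ l in Iic σ, exp (3 * l) * f₁ (exp l)
  have hF0 : ∀ σ ≤ (0 : ℝ), exp (-2 * σ) * F σ = 0 := fun σ hσ => by
    refine mul_eq_zero_of_right _ (setIntegral_eq_zero_of_forall_eq_zero fun l hl => ?_)
    rw [hvan _ (exp_le_one_iff.2 (le_trans hl hσ)), mul_zero]
  have hFle : ∀ σ, ‖exp (-2 * σ) * F σ‖ ≤ C / 2 := fun σ => by
    have hF : ‖F σ‖ ≤ C / 2 * exp (2 * σ) := norm_setIntegral_Iic_le_of_norm_le_exp two_pos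
      fun l _ => norm_exp_mul_comp_exp_le hC.le hvan hdec l
    calc ‖exp (-2 * σ) * F σ‖ = exp (-2 * σ) * ‖F σ‖ := by
          rw [norm_mul, norm_of_nonneg (exp_pos _).le]
      _ ≤ exp (-2 * σ) * (C / 2 * exp (2 * σ)) := by gcongr
      _ = C / 2 := by rw [mul_left_comm, ← exp_add, neg_mul, neg_add_cancel, exp_zero, mul_one]
  refine ⟨fun s hs => mul_eq_zero_of_right _ (setIntegral_eq_zero_of_forall_eq_zero
    fun σ hσ => hF0 σ (le_trans hσ hs)), C / 2, by positivity, fun s hs => ?_⟩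
  rw [← norm_eq_abs, norm_mul, norm_of_nonneg (exp_pos s).le,
    setIntegral_Iic_eq_setIntegral_Ioc_of_eq_zero hF0, mul_comm (C / 2), mul_assoc]
  gcongr
  refine (norm_setIntegral_le_of_norm_le_const measure_Ioc_lt_top fun σ _ => hFle σ).trans_eq ?_
  rw [volume_real_Ioc_of_le (zero_le_one.trans hs), sub_zero]

/-- The first Fourier mode of `Δu = f` on `ℝ²` with `|f₁(r)| ≤ C r^{−1}`, `f₁ ≡ 0` for
`r ≤ 1`: in the variable `s = log r` the explicit solution
`u₁(s) = e^s ∫_{−∞}^s e^{−2σ} (∫_{−∞}^σ e^{3λ} f₁(e^λ) dλ) dσ` vanishes for `s ≤ 0` and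
satisfies `|u₁| ≤ C' r log r`, i.e. `|u₁(s)| ≤ C' e^s s`. -/
theorem stmt15 (C : ℝ) (hC : 0 < C)
    (f₁ : ℝ → ℝ) (hcont : Continuous f₁) (hvan : ∀ r ≤ (1:ℝ), f₁ r = 0)
    (hdec : ∀ r : ℝ, 1 ≤ r → |f₁ r| ≤ C / r) :
    (∀ s ≤ (0:ℝ),
      Real.exp s * (∫ σ in Set.Iic s,
        Real.exp (-2 * σ) * ∫ l in Set.Iic σ, Real.exp (3 * l) * f₁ (Real.exp l)) = 0) ∧
    (∃ C' > 0, ∀ s : ℝ, 1 ≤ s →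
      |Real.exp s * ∫ σ in Set.Iic s,
        Real.exp (-2 * σ) * ∫ l in Set.Iic σ, Real.exp (3 * l) * f₁ (Real.exp l)| ≤
        C' * Real.exp s * s) :=
  stmt15_general C hC f₁ hvan hdec
end
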